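/- arXiv:math-ph/0606017 — 2 statements merged into one kernel-verified Lean document; each statement's English description precedes it below -/
import Mathlib

section
/- Let m : [0, ∞) → ℝ be C² with m(0) = 0, m''(r) = (1/2) V(r) m(r) for 0 ≤ r ≤ R̃, m'(R̃) = 1, and 0 < m(r) ≤ r for all 0 < r ≤ R̃, where V ≥ 0. Then for all 0 ≤ r ≤ R̃ one has m'(r) ≥ 1 - (1/2)∫₀^∞ s V(s) ds, and consequently m(r) ≥ r (1 - (1/2)∫₀^∞ s V(s) ds). -/
/-!
Integrating `m'' = ½ V m ≤ ½ s V(s)` (which uses `m(s) ≤ s`) from `r` to `R̃` against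
`m'(R̃) = 1` gives `m'(r) ≥ 1 - ½ ∫₀^∞ s V(s) ds`; the bound on `m` then follows from
`m(0) = 0` by the mean value inequality.
-/

open MeasureTheory Set

theorem intervalIntegral_le_setIntegral_Ioi {f : ℝ → ℝ} {a r R : ℝ} (har : a ≤ r) (hrR : r ≤ R)
    (hf : IntegrableOn f (Ioi a)) (hf0 : ∀ x ∈ Ioi a, 0 ≤ f x) :
    ∫ x in r..R, f x ≤ ∫ x in Ioi a, f x := by
  have hsub : Ioc r R ⊆ Ioi a := fun x hx => har.trans_lt hx.1
  rw [intervalIntegral.integral_of_le hrR]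
  exact setIntegral_mono_set hf ((ae_restrict_mem measurableSet_Ioi).mono hf0) hsub.eventuallyLE

theorem deriv_sub_deriv_le_integral_of_ode {V m : ℝ → ℝ} {r R : ℝ} (hr : 0 ≤ r) (hrR : r ≤ R)
    (hV : ∀ s, 0 ≤ V s) (hVint : IntegrableOn (fun s => s * V s) (Ioi 0))
    (hm : ContDiff ℝ 2 m) (hode : ∀ s ∈ Icc r R, deriv (deriv m) s = 1 / 2 * V s * m s)
    (hbound : ∀ s ∈ Ioo r R, m s ≤ s) :
    deriv m R - deriv m r ≤ ∫ s in r..R, 1 / 2 * (s * V s) := by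
  have hm' : ContDiff ℝ 1 (deriv m) := hm.deriv'
  refine intervalIntegral.sub_le_integral_of_hasDeriv_right_of_le hrR
    hm'.continuous.continuousOn
    (fun s _ => (hm'.differentiable one_ne_zero s).hasDerivAt.hasDerivWithinAt) ?_ ?_
  · rw [integrableOn_Icc_iff_integrableOn_Ioc]
    exact (hVint.mono_set fun s hs => hr.trans_lt hs.1).const_mul (1 / 2)
  · intro s hs
    rw [hode s (Ioo_subset_Icc_self hs), mul_assoc, mul_comm s]
    gcongr
    exacts [hV s, hbound s hs]

theorem radial_scattering_derivative_lower_bound_general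
    (V m : ℝ → ℝ) (Rt : ℝ)
    (hV : ∀ s, 0 ≤ V s)
    (hVint : IntegrableOn (fun s => s * V s) (Set.Ioi (0 : ℝ)))
    (hm : ContDiff ℝ 2 m) (hm0 : m 0 = 0)
    (hode : ∀ r ∈ Set.Icc (0 : ℝ) Rt, deriv (deriv m) r = (1/2) * V r * m r)
    (hm1 : deriv m Rt = 1)
    (hbound : ∀ r ∈ Set.Ioc (0 : ℝ) Rt, 0 < m r ∧ m r ≤ r) :
    ∀ r ∈ Set.Icc (0 : ℝ) Rt,
      1 - (1/2) * (∫ s in Set.Ioi (0 : ℝ), s * V s) ≤ deriv m r ∧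
      r * (1 - (1/2) * (∫ s in Set.Ioi (0 : ℝ), s * V s)) ≤ m r := by
  have hderiv : ∀ r ∈ Icc (0 : ℝ) Rt, 1 - 1 / 2 * (∫ s in Ioi (0 : ℝ), s * V s) ≤ deriv m r := by
    rintro r ⟨hr, hrR⟩
    have hode_r : deriv m Rt - deriv m r ≤ ∫ s in r..Rt, 1 / 2 * (s * V s) :=
      deriv_sub_deriv_le_integral_of_ode hr hrR hV hVint hm
        (fun s hs => hode s ⟨hr.trans hs.1, hs.2⟩)
        (fun s hs => (hbound s ⟨hr.trans_lt hs.1, hs.2.le⟩).2)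
    have htail : ∫ s in r..Rt, s * V s ≤ ∫ s in Ioi (0 : ℝ), s * V s :=
      intervalIntegral_le_setIntegral_Ioi hr hrR hVint fun s hs => mul_nonneg hs.le (hV s)
    rw [intervalIntegral.integral_const_mul, hm1] at hode_r
    linarith
  intro r hr
  refine ⟨hderiv r hr, ?_⟩
  have hmvt := (convex_Icc (0 : ℝ) Rt).mul_sub_le_image_sub_of_le_deriv
    hm.continuous.continuousOn (hm.differentiable two_ne_zero).differentiableOn
    (fun x hx => hderiv x (interior_subset hx)) 0 ⟨le_rfl, hr.1.trans hr.2⟩ r hr hr.1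
  simpa [hm0, mul_comm r] using hmvt

/-- If `m` is `C²` with `m(0) = 0`, `m'' = (1/2) V m` on `[0, R̃]`, `m'(R̃) = 1`
and `0 < m(r) ≤ r` on `(0, R̃]`, with `V ≥ 0`, then
`m'(r) ≥ 1 - (1/2)∫₀^∞ s V(s) ds` and `m(r) ≥ r (1 - (1/2)∫₀^∞ s V(s) ds)` on `[0, R̃]`. -/
theorem radial_scattering_derivative_lower_bound
    (V m : ℝ → ℝ) (Rt : ℝ) (hRt : 0 < Rt)
    (hV : ∀ s, 0 ≤ V s) (hVcont : Continuous V)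
    (hVint : IntegrableOn (fun s => s * V s) (Set.Ioi (0 : ℝ)))
    (hm : ContDiff ℝ 2 m) (hm0 : m 0 = 0)
    (hode : ∀ r ∈ Set.Icc (0 : ℝ) Rt, deriv (deriv m) r = (1/2) * V r * m r)
    (hm1 : deriv m Rt = 1)
    (hbound : ∀ r ∈ Set.Ioc (0 : ℝ) Rt, 0 < m r ∧ m r ≤ r) :
    ∀ r ∈ Set.Icc (0 : ℝ) Rt,
      1 - (1/2) * (∫ s in Set.Ioi (0 : ℝ), s * V s) ≤ deriv m r ∧
      r * (1 - (1/2) * (∫ s in Set.Ioi (0 : ℝ), s * V s)) ≤ m r :=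
  radial_scattering_derivative_lower_bound_general V m Rt hV hVint hm hm0 hode hm1 hbound
end

section
/- Let m : [0,∞) → ℝ be C² with m(0) = 0, m''(r) = (1/2)V(r) m(r), 0 < m(r) ≤ r, where V ≥ 0 and 8π a₀ = 4π ∫₀^∞ s² V(s) (m(s)/s) ds. Then for the radial function φ₀(r) = m(r)/r one has |φ₀'(r)| ≤ (1/r²) ∫₀^r κ m''(κ) dκ ≤ c a₀ / r² for all r > 0, for a universal constant c. -/
open MeasureTheory Real

/-- Derivative bound for the radial zero-energy scattering solution `φ₀(r) = m(r)/r`: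
`|φ₀'(r)| ≤ r⁻² ∫₀^r κ m''(κ) dκ ≤ c a₀ / r²` for a universal constant `c`. -/
theorem radial_scattering_gradient_bound
    (V m : ℝ → ℝ) (a₀ : ℝ)
    (hV : ∀ s, 0 ≤ V s)
    (hm : ContDiff ℝ 2 m) (hm0 : m 0 = 0)
    (hode : ∀ r, 0 ≤ r → deriv (deriv m) r = (1/2) * V r * m r)
    (hbound : ∀ r, 0 < r → 0 < m r ∧ m r ≤ r)
    (hVint : IntegrableOn (fun s => s ^ 2 * V s * (m s / s)) (Set.Ioi (0 : ℝ)))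
    (ha : 8 * π * a₀ = 4 * π * ∫ s in Set.Ioi (0 : ℝ), s ^ 2 * V s * (m s / s)) :
    ∃ c : ℝ, 0 < c ∧ ∀ r : ℝ, 0 < r →
      |deriv (fun s => m s / s) r| ≤ (1 / r ^ 2) * (∫ κ in (0:ℝ)..r, κ * deriv (deriv m) κ) ∧
      (1 / r ^ 2) * (∫ κ in (0:ℝ)..r, κ * deriv (deriv m) κ) ≤ c * a₀ / r ^ 2 := by
  have hπ : (π:ℝ) ≠ 0 := pi_ne_zero
  set I := ∫ s in Set.Ioi (0:ℝ), s ^ 2 * V s * (m s / s) with hIdef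
  have ha0 : I = 2 * a₀ := by
    have hπ' := pi_pos
    nlinarith [ha]
  have hdm : Differentiable ℝ m := hm.differentiable (by norm_num)
  have hCd : ContDiff ℝ 1 (deriv m) := by
    have h2 : ContDiff ℝ ((1:ℕ)+1) m := by exact_mod_cast hm
    exact_mod_cast (contDiff_succ_iff_deriv.mp h2).2.2
  have hdm' : Differentiable ℝ (deriv m) := hCd.differentiable one_ne_zero
  have hcont2 : Continuous (deriv (deriv m)) := hCd.continuous_deriv le_rfl
  have hmnn : ∀ κ : ℝ, 0 ≤ κ → 0 ≤ m κ := by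
    intro κ hκ
    rcases eq_or_lt_of_le hκ with h | h
    · simp [← h, hm0]
    · exact (hbound κ h).1.le
  refine ⟨1, one_pos, fun r hr => ?_⟩
  have hr2 : (0:ℝ) < r ^ 2 := by positivity
  have hderiv : deriv (fun s => m s / s) r = (deriv m r * r - m r) / r ^ 2 := by
    have h := deriv_fun_div (hdm.differentiableAt) (differentiableAt_id) (ne_of_gt hr)
    simpa using h
  have hFTC : (∫ κ in (0:ℝ)..r, κ * deriv (deriv m) κ) = deriv m r * r - m r := by
    have h1 : ∀ κ ∈ Set.uIcc (0:ℝ) r,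
        HasDerivAt (fun x => deriv m x * x - m x) (κ * deriv (deriv m) κ) κ := by
      intro κ _
      have h := ((hdm'.differentiableAt.hasDerivAt.fun_mul (hasDerivAt_id' κ)).fun_sub
        hdm.differentiableAt.hasDerivAt)
      refine h.congr_deriv ?_
      ring
    have h2 : IntervalIntegrable (fun κ => κ * deriv (deriv m) κ) volume 0 r :=
      (continuous_id.mul hcont2).intervalIntegrable 0 r
    have := intervalIntegral.integral_eq_sub_of_hasDerivAt h1 h2
    simpa [hm0] using this
  have hJnn : 0 ≤ ∫ κ in (0:ℝ)..r, κ * deriv (deriv m) κ := by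
    apply intervalIntegral.integral_nonneg hr.le
    intro κ hκ
    rw [hode κ hκ.1]
    exact mul_nonneg hκ.1 (mul_nonneg (mul_nonneg (by norm_num) (hV κ)) (hmnn κ hκ.1))
  constructor
  · rw [hderiv, ← hFTC, abs_div, abs_of_nonneg hJnn, abs_of_nonneg hr2.le]
    rw [div_eq_mul_inv, mul_comm, one_div]
  · rw [one_mul]
    have hkey : (∫ κ in (0:ℝ)..r, κ * deriv (deriv m) κ)
        = (1/2) * ∫ s in Set.Ioc (0:ℝ) r, s ^ 2 * V s * (m s / s) := by
      rw [intervalIntegral.integral_of_le hr.le]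
      rw [← integral_const_mul]
      apply setIntegral_congr_fun measurableSet_Ioc
      intro κ hκ
      have hκ0 : (0:ℝ) < κ := hκ.1
      show κ * deriv (deriv m) κ = _
      rw [hode κ hκ0.le]
      field_simp
    have hle : (∫ s in Set.Ioc (0:ℝ) r, s ^ 2 * V s * (m s / s)) ≤ I := by
      apply setIntegral_mono_set hVint
      · filter_upwards [ae_restrict_mem measurableSet_Ioi] with s hs
        have hs0 : (0:ℝ) < s := hs
        have := (hbound s hs0).1
        simp only [Pi.zero_apply]
        have hVs := hV s
        positivity
      · exact HasSubset.Subset.eventuallyLE Set.Ioc_subset_Ioi_self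
    have : (∫ κ in (0:ℝ)..r, κ * deriv (deriv m) κ) ≤ a₀ := by
      rw [hkey]; linarith
    calc 1 / r ^ 2 * (∫ κ in (0:ℝ)..r, κ * deriv (deriv m) κ)
        ≤ 1 / r ^ 2 * a₀ := by
          exact mul_le_mul_of_nonneg_left this (by positivity)
      _ = a₀ / r ^ 2 := by ring
end
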